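/- The number of visible endpoints is a 2-approximation of the number of visible segments: for a set S of n disjoint closed segments and a point p not on any segment, if m_p is the number of segments of S visible from p and ve_p is the number of segment endpoints visible from p, then m_p ≤ ve_p ≤ 2·m_p. -/

import Mathlib

/-!
Each visible endpoint is charged to a visible segment containing it, at most two per segment,
so `ve_p ≤ 2 m_p`.

Conversely, orient a visible segment `e` counterclockwise around `p` and let `q₀ ∈ e` be the
counterclockwise end of the closure of its visible part. Either `q₀` is the counterclockwise
endpoint of `e`, or some segment `f` occludes the views of `e` just beyond `q₀`; by compactness `f`
then meets the open segment `(p, q₀)`. A transversal crossing of `(p, q₀)` would persist for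
nearby views and contradict that `q₀` is a limit of visible points, so `f` meets `(p, q₀)` at an
endpoint, and for the same reason (plus general position) nothing hides that endpoint. Charging `e`
to the endpoint found in this way is injective: general position leaves at most one endpoint on a
ray from `p`, and the orientation separates the two kinds of charge.
-/

open scoped Classical

open Set Filter Topology AffineMap

section Segments

variable {E : Type*} [AddCommGroup E] [Module ℝ E]

lemma openSegment_subset_openSegment_of_mem {p q b : E} (hb : b ∈ openSegment ℝ p q) :
    openSegment ℝ p b ⊆ openSegment ℝ p q := by
  rw [openSegment_eq_image_lineMap] at hb ⊢
  obtain ⟨u, hu, rfl⟩ := hb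
  rintro _ ⟨s, hs, rfl⟩
  rw [lineMap_lineMap_right]
  exact lineMap_mem_openSegment _ _ _
    ⟨mul_pos hs.1 hu.1, mul_lt_one_of_nonneg_of_lt_one_left hs.1.le hs.2 hu.2.le⟩

lemma eq_lineMap_div_of_lineMap_eq {p q q' : E} {u u' : ℝ} (hu' : u' ≠ 0)
    (h : lineMap p q u = lineMap p q' u') : q' = lineMap p q (u / u') := by
  rw [lineMap_apply_module', lineMap_apply_module', add_left_inj] at h
  rw [lineMap_apply_module', div_eq_inv_mul, mul_smul, h, smul_smul, inv_mul_cancel₀ hu',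
    one_smul, sub_add_cancel]

lemma mem_openSegment_or_mem_openSegment {p a q₁ q₂ : E} (h₁ : a ∈ openSegment ℝ p q₁)
    (h₂ : a ∈ openSegment ℝ p q₂) (hne : q₁ ≠ q₂) :
    q₁ ∈ openSegment ℝ p q₂ ∨ q₂ ∈ openSegment ℝ p q₁ := by
  rw [openSegment_eq_image_lineMap] at h₁ h₂
  obtain ⟨u₁, hu₁, rfl⟩ := h₁
  obtain ⟨u₂, hu₂, h⟩ := h₂
  rcases lt_trichotomy u₁ u₂ with hlt | rfl | hgt
  · right
    rw [eq_lineMap_div_of_lineMap_eq hu₂.1.ne' h.symm]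
    exact lineMap_mem_openSegment _ _ _ ⟨div_pos hu₁.1 hu₂.1, (div_lt_one hu₂.1).2 hlt⟩
  · refine absurd ?_ hne
    rw [eq_lineMap_div_of_lineMap_eq hu₁.1.ne' h.symm, div_self hu₁.1.ne', lineMap_apply_one]
  · left
    rw [eq_lineMap_div_of_lineMap_eq hu₁.1.ne' h]
    exact lineMap_mem_openSegment _ _ _ ⟨div_pos hu₂.1 hu₁.1, (div_lt_one hu₁.1).2 hgt⟩

lemma notMem_openSegment_of_not_collinear {p a b w q : E} (h : ¬ Collinear ℝ {p, a, b})
    (hw : w ∈ segment ℝ a b) (hq : q ∈ segment ℝ a b) : w ∉ openSegment ℝ p q := by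
  intro hwq
  refine h (collinear_insert_of_mem_affineSpan_pair ?_)
  have hq' : q ∈ line[ℝ, a, b] := (mem_segment_iff_wbtw.1 hq).mem_affineSpan
  by_cases hwq' : w = q
  · rw [hwq', right_mem_openSegment_iff] at hwq
    rwa [hwq]
  · have hcol : Collinear ℝ {p, w, q} :=
      (mem_segment_iff_wbtw.1 (openSegment_subset_segment _ _ _ hwq)).collinear
    exact affineSpan_pair_le_of_mem_of_mem (mem_segment_iff_wbtw.1 hw).mem_affineSpan hq'
      (hcol.mem_affineSpan_of_mem_of_ne (by simp) (by simp) (by simp) hwq')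

end Segments

section Topology

variable {E : Type*} [AddCommGroup E] [Module ℝ E] [TopologicalSpace E] [IsTopologicalAddGroup E]
  [ContinuousSMul ℝ E]

lemma isClosed_setOf_segment_inter_nonempty (p : E) {K : Set E} (hK : IsClosed K) :
    IsClosed {q | (segment ℝ p q ∩ K).Nonempty} := by
  have : {q | (segment ℝ p q ∩ K).Nonempty} =
      Prod.fst '' {x : E × unitInterval | lineMap p x.1 (x.2 : ℝ) ∈ K} := by
    ext q
    simp [segment_eq_image_lineMap, unitInterval, Set.Nonempty]
  rw [this]
  exact isClosedMap_fst_of_compactSpace _ (hK.preimage (by fun_prop))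

lemma isClosed_segment [T2Space E] (x y : E) : IsClosed (segment ℝ x y) := by
  rw [← convexHull_pair]
  exact (toFinite _).isClosed_convexHull ℝ

end Topology

lemma exists_mem_closure_of_forall_gt_notMem {X : Type*} [TopologicalSpace X] {f : ℝ → X}
    (hf : Continuous f) {W : Set X} (hW : ∃ t ∈ Icc (0 : ℝ) 1, f t ∈ W) :
    ∃ t₀ ∈ Icc (0 : ℝ) 1, f t₀ ∈ closure W ∧ ∀ t ∈ Ioc t₀ 1, f t ∉ W := by
  set V := Icc (0 : ℝ) 1 ∩ f ⁻¹' W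
  have hVne : V.Nonempty := hW
  have hVbdd : BddAbove V := ⟨1, fun t ht => ht.1.2⟩
  have h₀ : 0 ≤ sSup V := hVne.some_mem.1.1.trans (le_csSup hVbdd hVne.some_mem)
  refine ⟨sSup V, ⟨h₀, csSup_le hVne fun t ht => ht.1.2⟩, ?_, fun t ht htW => ?_⟩
  · exact closure_mono (image_subset_iff.2 fun t ht => ht.2)
      (mem_closure_image hf.continuousAt (csSup_mem_closure hVne hVbdd))
  · exact (le_csSup hVbdd ⟨⟨h₀.trans ht.1.le, ht.2⟩, htW⟩).not_gt ht.1

namespace SegmentVisibility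

/-- Twice the signed area of the triangle `p a b`, positive iff `b` lies counterclockwise of `a`
as seen from `p`. -/
def cross (p a b : ℝ × ℝ) : ℝ := (a.1 - p.1) * (b.2 - p.2) - (a.2 - p.2) * (b.1 - p.1)

lemma cross_lineMap_right (p a x y : ℝ × ℝ) (t : ℝ) :
    cross p a (lineMap x y t) = (1 - t) * cross p a x + t * cross p a y := by
  simp only [cross, fst_lineMap, snd_lineMap, lineMap_apply_ring']; ring

lemma cross_lineMap_lineMap (p a b : ℝ × ℝ) (s t : ℝ) :
    cross p (lineMap a b s) (lineMap a b t) = (t - s) * cross p a b := by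
  simp only [cross, fst_lineMap, snd_lineMap, lineMap_apply_ring']; ring

lemma cross_lineMap_lineMap_of_left (p a b : ℝ × ℝ) (s t : ℝ) :
    cross p (lineMap p a s) (lineMap p b t) = s * t * cross p a b := by
  simp only [cross, fst_lineMap, snd_lineMap, lineMap_apply_ring']; ring

lemma continuous_cross_right (p a : ℝ × ℝ) : Continuous (cross p a) := by
  unfold cross; fun_prop

lemma collinear_of_cross_eq_zero {p a b : ℝ × ℝ} (h : cross p a b = 0) :
    Collinear ℝ {p, a, b} := by
  by_cases hap : a = p
  · simp [hap, collinear_pair]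
  have hd : (a.1 - p.1) ^ 2 + (a.2 - p.2) ^ 2 ≠ 0 := by
    intro h0
    exact hap (Prod.ext (by nlinarith) (by nlinarith))
  have hb : b = lineMap p a
      (((b.1 - p.1) * (a.1 - p.1) + (b.2 - p.2) * (a.2 - p.2)) /
        ((a.1 - p.1) ^ 2 + (a.2 - p.2) ^ 2)) := by
    unfold cross at h
    ext <;> simp only [fst_lineMap, snd_lineMap, lineMap_apply_ring'] <;> field_simp
    · linear_combination (p.2 - a.2) * h
    · linear_combination (a.1 - p.1) * h
  rw [pair_comm, insert_comm, hb]
  exact collinear_insert_of_mem_affineSpan_pair (lineMap_mem_affineSpan_pair _ _ _)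

lemma eventually_openSegment_inter_segment_nonempty {p q₀ a b z : ℝ × ℝ}
    (hpab : ¬ Collinear ℝ {p, a, b}) (hz : z ∈ openSegment ℝ p q₀)
    (hzab : z ∈ openSegment ℝ a b) :
    ∀ᶠ q in 𝓝 q₀, (openSegment ℝ p q ∩ segment ℝ a b).Nonempty := by
  rw [openSegment_eq_image_lineMap] at hz hzab
  obtain ⟨u₀, hu₀, rfl⟩ := hz
  obtain ⟨s₀, hs₀, hz⟩ := hzab
  have hu₀D : u₀ * (cross a b p - cross a b q₀) = cross a b p := by
    have h := congrArg (cross a b) hz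
    rw [cross_lineMap_right, cross_lineMap_right] at h
    unfold cross at h ⊢
    linear_combination h
  have hs₀D : s₀ * (cross a b p - cross a b q₀) = cross p a q₀ := by
    have h := congrArg (cross p q₀) hz
    rw [cross_lineMap_right, cross_lineMap_right] at h
    unfold cross at h ⊢
    linear_combination h
  have hD₀ : cross a b p - cross a b q₀ ≠ 0 := by
    intro h0
    refine hpab (collinear_of_cross_eq_zero ?_)
    rw [h0, mul_zero] at hu₀D
    unfold cross at hu₀D ⊢
    linear_combination -hu₀D
  have hD : Continuous fun q => cross a b p - cross a b q :=
    continuous_const.sub (continuous_cross_right a b)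
  -- Cramer's rule: for `q` near `q₀` the lines `p q` and `a b` meet at the parameters below,
  -- which tend to `u₀` and `s₀`
  have hu : ContinuousAt (fun q => cross a b p / (cross a b p - cross a b q)) q₀ :=
    continuousAt_const.div hD.continuousAt hD₀
  have hs : ContinuousAt (fun q => cross p a q / (cross a b p - cross a b q)) q₀ :=
    (continuous_cross_right p a).continuousAt.div hD.continuousAt hD₀
  filter_upwards [hD.continuousAt.eventually_ne hD₀,
    hu.eventually_mem (isOpen_Ioo.mem_nhds (eq_div_of_mul_eq hD₀ hu₀D ▸ hu₀)),
    hs.eventually_mem (isOpen_Ioo.mem_nhds (eq_div_of_mul_eq hD₀ hs₀D ▸ hs₀))]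
    with q hDq huq hsq
  refine ⟨_, lineMap_mem_openSegment _ _ _ huq, ?_⟩
  convert lineMap_mem_segment _ _ _ ⟨hsq.1.le, hsq.2.le⟩ using 1
  unfold cross at hDq ⊢
  ext <;> simp only [fst_lineMap, snd_lineMap, lineMap_apply_ring'] <;> field_simp <;> ring

section Visibility

variable {E : Type*}

def endpoints [DecidableEq E] (S : Finset (E × E)) : Finset E :=
  S.image Prod.fst ∪ S.image Prod.snd

lemma mem_endpoints_iff [DecidableEq E] {S : Finset (E × E)} {a : E} :
    a ∈ endpoints S ↔ ∃ e ∈ S, a = e.1 ∨ a = e.2 := by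
  simp only [endpoints, Finset.mem_union, Finset.mem_image]
  constructor
  · rintro (⟨e, he, rfl⟩ | ⟨e, he, rfl⟩)
    exacts [⟨e, he, Or.inl rfl⟩, ⟨e, he, Or.inr rfl⟩]
  · rintro ⟨e, he, rfl | rfl⟩
    exacts [Or.inl ⟨e, he, rfl⟩, Or.inr ⟨e, he, rfl⟩]

lemma fst_mem_endpoints [DecidableEq E] {S : Finset (E × E)} {e : E × E} (he : e ∈ S) :
    e.1 ∈ endpoints S :=
  mem_endpoints_iff.2 ⟨e, he, Or.inl rfl⟩

lemma snd_mem_endpoints [DecidableEq E] {S : Finset (E × E)} {e : E × E} (he : e ∈ S) :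
    e.2 ∈ endpoints S :=
  mem_endpoints_iff.2 ⟨e, he, Or.inr rfl⟩

variable [AddCommGroup E] [Module ℝ E]

def SegmentsDisjoint (S : Finset (E × E)) : Prop :=
  ∀ e ∈ S, ∀ e' ∈ S, e ≠ e' → segment ℝ e.1 e.2 ∩ segment ℝ e'.1 e'.2 = ∅

def OffSegments (S : Finset (E × E)) (p : E) : Prop :=
  ∀ e ∈ S, p ∉ segment ℝ e.1 e.2

def GeneralPosition [DecidableEq E] (S : Finset (E × E)) (p : E) : Prop :=
  ∀ a ∈ endpoints S, ∀ b ∈ endpoints S, a ≠ b → ¬ Collinear ℝ {p, a, b}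

def visibleSet (S : Finset (E × E)) (p : E) (e : E × E) : Set E :=
  {q | ∀ f ∈ S, f ≠ e → openSegment ℝ p q ∩ segment ℝ f.1 f.2 = ∅}

def IsVisibleEndpoint (S : Finset (E × E)) (p a : E) : Prop :=
  ∃ e ∈ S, (a = e.1 ∨ a = e.2) ∧ a ∈ visibleSet S p e

noncomputable def visibleSegments (S : Finset (E × E)) (p : E) : Finset (E × E) :=
  S.filter fun e => ∃ q ∈ segment ℝ e.1 e.2, q ∈ visibleSet S p e

noncomputable def visibleEndpoints [DecidableEq E] (S : Finset (E × E)) (p : E) : Finset E :=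
  (endpoints S).filter (IsVisibleEndpoint S p)

lemma SegmentsDisjoint.eq_of_mem {S : Finset (E × E)} (hdisj : SegmentsDisjoint S)
    {e f : E × E} {a : E} (he : e ∈ S) (hf : f ∈ S) (hae : a ∈ segment ℝ e.1 e.2)
    (haf : a ∈ segment ℝ f.1 f.2) : e = f := by
  by_contra h
  exact (hdisj e he f hf h).subset ⟨hae, haf⟩

lemma IsVisibleEndpoint.mem_endpoints [DecidableEq E] {S : Finset (E × E)} {p a : E}
    (h : IsVisibleEndpoint S p a) : a ∈ endpoints S :=
  let ⟨e, he, hae, _⟩ := h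
  mem_endpoints_iff.2 ⟨e, he, hae⟩

lemma card_visibleEndpoints_le [DecidableEq E] (S : Finset (E × E)) (p : E) :
    (visibleEndpoints S p).card ≤ 2 * (visibleSegments S p).card := calc
  (visibleEndpoints S p).card ≤ ((visibleSegments S p).biUnion fun e => {e.1, e.2}).card := by
    refine Finset.card_le_card fun a ha => ?_
    obtain ⟨e, he, hae, havis⟩ := (Finset.mem_filter.1 ha).2
    refine Finset.mem_biUnion.2 ⟨e, Finset.mem_filter.2 ⟨he, a, ?_, havis⟩, ?_⟩ <;>
      rcases hae with rfl | rfl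
    exacts [left_mem_segment _ _ _, right_mem_segment _ _ _, by simp, by simp]
  _ ≤ (visibleSegments S p).card * 2 :=
    Finset.card_biUnion_le_card_mul _ _ _ fun e _ => Finset.card_le_two
  _ = 2 * (visibleSegments S p).card := mul_comm _ _

lemma exists_occluder [TopologicalSpace E] [IsTopologicalAddGroup E] [ContinuousSMul ℝ E]
    [T2Space E] {S : Finset (E × E)} {p q₀ : E} {e : E × E} {R : Set E}
    (hdisj : SegmentsDisjoint S) (hp : OffSegments S p) (he : e ∈ S)
    (hq₀ : q₀ ∈ segment ℝ e.1 e.2) (hR : q₀ ∈ closure R) (hRvis : ∀ q ∈ R, q ∉ visibleSet S p e) :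
    ∃ f ∈ S, f ≠ e ∧ (∃ z ∈ segment ℝ f.1 f.2, z ∈ openSegment ℝ p q₀) ∧
      ∃ q ∈ R, (openSegment ℝ p q ∩ segment ℝ f.1 f.2).Nonempty := by
  have hcover : R ⊆ ⋃ f ∈ S.erase e,
      R ∩ {q | (openSegment ℝ p q ∩ segment ℝ f.1 f.2).Nonempty} := by
    intro q hq
    obtain ⟨f, hf, hfe, hblock⟩ :
        ∃ f ∈ S, f ≠ e ∧ openSegment ℝ p q ∩ segment ℝ f.1 f.2 ≠ ∅ := by
      simpa only [visibleSet, mem_ofPred_eq, not_forall, exists_prop] using hRvis q hq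
    exact mem_biUnion (Finset.mem_erase.2 ⟨hfe, hf⟩) ⟨hq, nonempty_iff_ne_empty.2 hblock⟩
  have hR' := closure_mono hcover hR
  rw [Finset.closure_biUnion] at hR'
  obtain ⟨f, hf, hq₀f⟩ := mem_iUnion₂.1 hR'
  obtain ⟨hfe, hf⟩ := Finset.mem_erase.1 hf
  refine ⟨f, hf, hfe, ?_, (closure_nonempty_iff.1 ⟨q₀, hq₀f⟩).imp fun q hq => hq⟩
  obtain ⟨z, hzq, hzf⟩ : (segment ℝ p q₀ ∩ segment ℝ f.1 f.2).Nonempty :=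
    closure_minimal (fun q hq => hq.mono (inter_subset_inter_left _
        (openSegment_subset_segment _ _ _)))
      (isClosed_setOf_segment_inter_nonempty p (isClosed_segment f.1 f.2))
      (closure_mono inter_subset_right hq₀f)
  refine ⟨z, hzf, mem_openSegment_of_ne_left_right ?_ ?_ hzq⟩
  · rintro rfl
    exact hp f hf hzf
  · rintro rfl
    exact hfe (hdisj.eq_of_mem hf he hzf hq₀)

end Visibility

section Plane

variable {S : Finset ((ℝ × ℝ) × (ℝ × ℝ))} {p : ℝ × ℝ}

lemma eq_endpoint_of_mem_closure_visibleSet (hgen : GeneralPosition S p)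
    {e f : (ℝ × ℝ) × (ℝ × ℝ)} {q₀ z : ℝ × ℝ} (hq₀ : q₀ ∈ closure (visibleSet S p e))
    (hf : f ∈ S) (hfe : f ≠ e) (hz : z ∈ segment ℝ f.1 f.2) (hzq : z ∈ openSegment ℝ p q₀) :
    z = f.1 ∨ z = f.2 := by
  by_contra! hne
  have hf₁₂ : f.1 ≠ f.2 := by
    rintro h
    rw [h, segment_same] at hz
    exact hne.2 hz
  have hblocked := eventually_openSegment_inter_segment_nonempty
    (hgen _ (fst_mem_endpoints hf) _ (snd_mem_endpoints hf) hf₁₂) hzq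
    (mem_openSegment_of_ne_left_right hne.1.symm hne.2.symm hz)
  obtain ⟨q, hq, hqvis⟩ := mem_closure_iff_nhds.1 hq₀ _ hblocked
  exact hq.ne_empty (hqvis f hf hfe)

lemma notMem_openSegment_of_mem_endpoints (hp : OffSegments S p) (hgen : GeneralPosition S p)
    {a b : ℝ × ℝ} (ha : a ∈ endpoints S) (hb : b ∈ endpoints S) : a ∉ openSegment ℝ p b := by
  intro hab
  refine hgen a ha b hb ?_
    (mem_segment_iff_wbtw.1 (openSegment_subset_segment _ _ _ hab)).collinear
  rintro rfl
  obtain ⟨e, he, hae⟩ := mem_endpoints_iff.1 ha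
  rw [right_mem_openSegment_iff] at hab
  subst hab
  rcases hae with rfl | rfl
  exacts [hp e he (left_mem_segment _ _ _), hp e he (right_mem_segment _ _ _)]

lemma openSegment_inter_eq_empty_of_mem_closure_visibleSet (hp : OffSegments S p)
    (hgen : GeneralPosition S p) {e f : (ℝ × ℝ) × (ℝ × ℝ)} {q₀ b : ℝ × ℝ}
    (hq₀ : q₀ ∈ closure (visibleSet S p e)) (hb : b ∈ endpoints S)
    (hbq : b = q₀ ∨ b ∈ openSegment ℝ p q₀) (hf : f ∈ S) (hfe : f ≠ e) :
    openSegment ℝ p b ∩ segment ℝ f.1 f.2 = ∅ := by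
  refine eq_empty_iff_forall_notMem.2 fun w ⟨hwb, hwf⟩ => ?_
  have hwq : w ∈ openSegment ℝ p q₀ := by
    rcases hbq with rfl | hbq
    exacts [hwb, openSegment_subset_openSegment_of_mem hbq hwb]
  have hw := eq_endpoint_of_mem_closure_visibleSet hgen hq₀ hf hfe hwf hwq
  exact notMem_openSegment_of_mem_endpoints hp hgen (mem_endpoints_iff.2 ⟨f, hf, hw⟩) hb hwb

/-- `a` is the endpoint charged to the segment `e`: the views of `e` end counterclockwise at the
ray through `q₀ ∈ e`, either because `q₀ = a` is the counterclockwise end of `e`, or because the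
segment `f` with endpoint `a` in front of `q₀` occludes the views just beyond. -/
def IsChargedEndpoint (S : Finset ((ℝ × ℝ) × (ℝ × ℝ))) (p : ℝ × ℝ) (e : (ℝ × ℝ) × (ℝ × ℝ))
    (a : ℝ × ℝ) : Prop :=
  ∃ q₀ ∈ segment ℝ e.1 e.2, q₀ ∈ closure (visibleSet S p e) ∧
    ((a = q₀ ∧ ∀ x ∈ segment ℝ e.1 e.2, cross p a x ≤ 0) ∨
      (a ∈ openSegment ℝ p q₀ ∧ ∃ f ∈ S, f ≠ e ∧ a ∈ segment ℝ f.1 f.2 ∧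
        ∃ x ∈ segment ℝ f.1 f.2, 0 < cross p a x))

lemma exists_isChargedEndpoint_of_endpoint (hp : OffSegments S p) (hgen : GeneralPosition S p)
    {e : (ℝ × ℝ) × (ℝ × ℝ)} {b : ℝ × ℝ} (he : e ∈ S) (hb : b = e.1 ∨ b = e.2)
    (hbvis : b ∈ closure (visibleSet S p e)) (hccw : ∀ x ∈ segment ℝ e.1 e.2, cross p b x ≤ 0) :
    ∃ a, IsVisibleEndpoint S p a ∧ IsChargedEndpoint S p e a := by
  refine ⟨b, ⟨e, he, hb, fun f hf hfe => ?_⟩, b, ?_, hbvis, Or.inl ⟨rfl, hccw⟩⟩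
  · exact openSegment_inter_eq_empty_of_mem_closure_visibleSet hp hgen hbvis
      (mem_endpoints_iff.2 ⟨e, he, hb⟩) (Or.inl rfl) hf hfe
  · rcases hb with rfl | rfl
    exacts [left_mem_segment _ _ _, right_mem_segment _ _ _]

lemma exists_isChargedEndpoint_of_occluded (hdisj : SegmentsDisjoint S) (hp : OffSegments S p)
    (hgen : GeneralPosition S p) {e : (ℝ × ℝ) × (ℝ × ℝ)} {q₀ : ℝ × ℝ} {R : Set (ℝ × ℝ)}
    (he : e ∈ S) (hq₀e : q₀ ∈ segment ℝ e.1 e.2) (hq₀ : q₀ ∈ closure (visibleSet S p e))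
    (hR : q₀ ∈ closure R) (hRvis : ∀ q ∈ R, q ∉ visibleSet S p e)
    (hRccw : ∀ q ∈ R, q ∈ segment ℝ e.1 e.2 ∧ 0 < cross p q₀ q) :
    ∃ a, IsVisibleEndpoint S p a ∧ IsChargedEndpoint S p e a := by
  obtain ⟨f, hf, hfe, ⟨z, hzf, hzq⟩, q, hqR, x, hxq, hxf⟩ :=
    exists_occluder hdisj hp he hq₀e hR hRvis
  have hz := eq_endpoint_of_mem_closure_visibleSet hgen hq₀ hf hfe hzf hzq
  refine ⟨z, ⟨f, hf, hz, fun g hg hgf => ?_⟩, q₀, hq₀e, hq₀,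
    Or.inr ⟨hzq, f, hf, hfe, hzf, x, hxf, ?_⟩⟩
  · rcases eq_or_ne g e with rfl | hge
    · have hg₁₂ : g.1 ≠ g.2 := by
        intro h
        obtain ⟨hqg, hpos⟩ := hRccw q hqR
        rw [h, segment_same, mem_singleton_iff] at hqg hq₀e
        rw [hqg, hq₀e] at hpos
        unfold cross at hpos
        linarith
      have hcol := hgen _ (fst_mem_endpoints hg) _ (snd_mem_endpoints hg) hg₁₂
      exact eq_empty_iff_forall_notMem.2 fun w ⟨hwz, hwg⟩ =>
        notMem_openSegment_of_not_collinear hcol hwg hq₀e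
          (openSegment_subset_openSegment_of_mem hzq hwz)
    · exact openSegment_inter_eq_empty_of_mem_closure_visibleSet hp hgen hq₀
        (mem_endpoints_iff.2 ⟨f, hf, hz⟩) (Or.inr hzq) hg hge
  · rw [openSegment_eq_image_lineMap] at hzq hxq
    obtain ⟨u, hu, rfl⟩ := hzq
    obtain ⟨v, hv, rfl⟩ := hxq
    rw [cross_lineMap_lineMap_of_left]
    exact mul_pos (mul_pos hu.1 hv.1) (hRccw q hqR).2

lemma exists_isChargedEndpoint (hdisj : SegmentsDisjoint S) (hp : OffSegments S p)
    (hgen : GeneralPosition S p) {e : (ℝ × ℝ) × (ℝ × ℝ)} (he : e ∈ S)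
    (hvis : ∃ q ∈ segment ℝ e.1 e.2, q ∈ visibleSet S p e) :
    ∃ a, IsVisibleEndpoint S p a ∧ IsChargedEndpoint S p e a := by
  obtain ⟨A, B, hAB, hB, hA, hABp⟩ : ∃ A B, segment ℝ A B = segment ℝ e.1 e.2 ∧
      (B = e.1 ∨ B = e.2) ∧ A ∈ endpoints S ∧ 0 ≤ cross p A B := by
    rcases le_total 0 (cross p e.1 e.2) with h | h
    · exact ⟨e.1, e.2, rfl, Or.inr rfl, fst_mem_endpoints he, h⟩
    · refine ⟨e.2, e.1, segment_symm _ _ _, Or.inl rfl, snd_mem_endpoints he, ?_⟩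
      unfold cross at h ⊢
      linarith
  rw [← hAB, segment_eq_image_lineMap, exists_mem_image] at hvis
  obtain ⟨t₀, ⟨ht₀0, ht₀1⟩, hq₀, hblocked⟩ :=
    exists_mem_closure_of_forall_gt_notMem lineMap_continuous hvis
  rcases ht₀1.eq_or_lt with rfl | ht₀
  · rw [lineMap_apply_one] at hq₀
    refine exists_isChargedEndpoint_of_endpoint hp hgen he hB hq₀ fun x hx => ?_
    rw [← hAB, segment_eq_image_lineMap] at hx
    obtain ⟨s, hs, rfl⟩ := hx
    have h := cross_lineMap_lineMap p A B 1 s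
    rw [lineMap_apply_one] at h
    rw [h]
    exact mul_nonpos_of_nonpos_of_nonneg (by linarith [hs.2]) hABp
  have hAB' : A ≠ B := by
    rintro rfl
    obtain ⟨t, -, ht⟩ := hvis
    rw [lineMap_same_apply] at ht
    exact hblocked 1 ⟨ht₀, le_rfl⟩ (by rwa [lineMap_same_apply])
  have hABpos : 0 < cross p A B := hABp.lt_of_ne fun h =>
    hgen A hA B (mem_endpoints_iff.2 ⟨e, he, hB⟩) hAB' (collinear_of_cross_eq_zero h.symm)
  refine exists_isChargedEndpoint_of_occluded hdisj hp hgen he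
    (hAB ▸ lineMap_mem_segment _ _ _ ⟨ht₀0, ht₀1⟩) hq₀ (R := lineMap A B '' Ioc t₀ 1) ?_ ?_ ?_
  · refine mem_closure_image lineMap_continuous.continuousAt ?_
    rw [closure_Ioc ht₀.ne]
    exact left_mem_Icc.2 ht₀1
  · rintro _ ⟨t, ht, rfl⟩
    exact hblocked t ht
  · rintro _ ⟨t, ht, rfl⟩
    refine ⟨hAB ▸ lineMap_mem_segment _ _ _ ⟨ht₀0.trans ht.1.le, ht.2⟩, ?_⟩
    rw [cross_lineMap_lineMap]
    exact mul_pos (sub_pos.2 ht.1) hABpos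

lemma eq_of_isChargedEndpoint (hdisj : SegmentsDisjoint S) (hp : OffSegments S p)
    (hgen : GeneralPosition S p) {e₁ e₂ : (ℝ × ℝ) × (ℝ × ℝ)} {a : ℝ × ℝ} (he₁ : e₁ ∈ S)
    (he₂ : e₂ ∈ S) (ha : a ∈ endpoints S) (h₁ : IsChargedEndpoint S p e₁ a)
    (h₂ : IsChargedEndpoint S p e₂ a) : e₁ = e₂ := by
  obtain ⟨q₁, hq₁e, hq₁, ⟨rfl, hcw₁⟩ | ⟨ha₁, f₁, hf₁, -, haf₁, x₁, hx₁, hpos₁⟩⟩ := h₁ <;>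
  obtain ⟨q₂, hq₂e, hq₂, ⟨rfl, hcw₂⟩ | ⟨ha₂, f₂, hf₂, -, haf₂, x₂, hx₂, hpos₂⟩⟩ := h₂
  · exact hdisj.eq_of_mem he₁ he₂ hq₁e hq₂e
  · obtain rfl := hdisj.eq_of_mem he₁ hf₂ hq₁e haf₂
    exact absurd hpos₂ (hcw₁ x₂ hx₂).not_gt
  · obtain rfl := hdisj.eq_of_mem he₂ hf₁ hq₂e haf₁
    exact absurd hpos₁ (hcw₂ x₁ hx₁).not_gt
  · by_contra hne
    have hq : q₁ ≠ q₂ := fun h => hne (hdisj.eq_of_mem he₁ he₂ hq₁e (h ▸ hq₂e))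
    rcases mem_openSegment_or_mem_openSegment ha₁ ha₂ hq with h | h
    · have hq₁E := mem_endpoints_iff.2
        ⟨e₁, he₁, eq_endpoint_of_mem_closure_visibleSet hgen hq₂ he₁ hne hq₁e h⟩
      exact notMem_openSegment_of_mem_endpoints hp hgen ha hq₁E ha₁
    · have hq₂E := mem_endpoints_iff.2
        ⟨e₂, he₂, eq_endpoint_of_mem_closure_visibleSet hgen hq₁ he₂ (Ne.symm hne) hq₂e h⟩
      exact notMem_openSegment_of_mem_endpoints hp hgen ha hq₂E ha₂

lemma card_visibleSegments_le (hdisj : SegmentsDisjoint S) (hp : OffSegments S p)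
    (hgen : GeneralPosition S p) : (visibleSegments S p).card ≤ (visibleEndpoints S p).card := by
  have hcharged : ∀ e ∈ visibleSegments S p,
      ∃ a, IsVisibleEndpoint S p a ∧ IsChargedEndpoint S p e a := fun e he =>
    exists_isChargedEndpoint hdisj hp hgen (Finset.mem_filter.1 he).1 (Finset.mem_filter.1 he).2
  choose! charge hcharge using hcharged
  refine Finset.card_le_card_of_injOn charge (fun e he => ?_) fun e₁ he₁ e₂ he₂ h => ?_
  · exact Finset.mem_filter.2 ⟨(hcharge e he).1.mem_endpoints, (hcharge e he).1⟩
  · exact eq_of_isChargedEndpoint hdisj hp hgen (Finset.mem_filter.1 he₁).1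
      (Finset.mem_filter.1 he₂).1 (hcharge e₁ he₁).1.mem_endpoints (hcharge e₁ he₁).2
      (h ▸ (hcharge e₂ he₂).2)

end Plane

end SegmentVisibility

open SegmentVisibility in
/-- The number of visible endpoints is a 2-approximation of the number of
visible segments: `m_p ≤ ve_p ≤ 2 * m_p`.  Segments are given by their pairs
of endpoints, are pairwise disjoint, `p` lies on none of them, and no two
distinct endpoints are collinear with `p` (general position). -/
theorem visible_endpoints_two_approx
    (S : Finset ((ℝ × ℝ) × (ℝ × ℝ)))
    (hdisj : ∀ e ∈ S, ∀ e' ∈ S, e ≠ e' →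
      segment ℝ e.1 e.2 ∩ segment ℝ e'.1 e'.2 = ∅)
    (p : ℝ × ℝ) (hp : ∀ e ∈ S, p ∉ segment ℝ e.1 e.2)
    (hgen : ∀ a ∈ S.image Prod.fst ∪ S.image Prod.snd,
            ∀ b ∈ S.image Prod.fst ∪ S.image Prod.snd,
      a ≠ b → ¬ Collinear ℝ ({p, a, b} : Set (ℝ × ℝ)))
    (m_p ve_p : ℕ)
    (hm : m_p = (S.filter (fun e => ∃ q ∈ segment ℝ e.1 e.2, ∀ e' ∈ S, e' ≠ e →
      openSegment ℝ p q ∩ segment ℝ e'.1 e'.2 = ∅)).card)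
    (hve : ve_p = ((S.image Prod.fst ∪ S.image Prod.snd).filter
      (fun a => ∃ e ∈ S, (a = e.1 ∨ a = e.2) ∧ ∀ e' ∈ S, e' ≠ e →
        openSegment ℝ p a ∩ segment ℝ e'.1 e'.2 = ∅)).card) :
    m_p ≤ ve_p ∧ ve_p ≤ 2 * m_p := by
  subst hm hve
  -- the statement's filters carry structurally built `Decidable` instances, not the classical ones
  convert And.intro (card_visibleSegments_le hdisj hp hgen) (card_visibleEndpoints_le S p) <;>
    exact Finset.filter_congr fun _ _ => Iff.rfl
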